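/- Let G be a connected graph on n vertices with minimum degree at least d. If n ≥ 2d + 1, then G contains a path of length at least 2d (i.e., a path with at least 2d edges). -/

import Mathlib

open SimpleGraph Walk

private lemma firstDart_mem_darts' {V : Type*} {G : SimpleGraph V} {a b : V}
    (q : G.Walk a b) (hq : ¬ q.Nil) : q.firstDart hq ∈ q.darts := by
  cases q with
  | nil => simp at hq
  | cons h r =>
    apply List.mem_cons.2
    left
    ext <;> simp [Walk.firstDart]

theorem long_path_of_connected_min_degree
    {V : Type*} [Fintype V] [DecidableEq V]
    (G : SimpleGraph V) [DecidableRel G.Adj]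
    (d : ℕ) (hconn : G.Connected) (hdeg : ∀ v : V, d ≤ G.degree v)
    (hcard : 2 * d + 1 ≤ Fintype.card V) :
    ∃ (u v : V) (p : G.Walk u v), p.IsPath ∧ 2 * d ≤ p.length := by
  classical
  set PL : Set ℕ := {n | ∃ (a b : V) (q : G.Walk a b), q.IsPath ∧ q.length = n} with hPL
  have hne : PL.Nonempty := by
    have hpos : 0 < Fintype.card V := by omega
    obtain ⟨x⟩ := Fintype.card_pos_iff.mp hpos
    exact ⟨0, x, x, Walk.nil, Walk.IsPath.nil, rfl⟩
  have hbdd : BddAbove PL := by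
    refine ⟨Fintype.card V, fun n hn => ?_⟩
    obtain ⟨a, b, q, hq, rfl⟩ := hn
    exact hq.length_lt.le
  set k := sSup PL with hk
  obtain ⟨u, v, p, hp, hplen⟩ : k ∈ PL := Nat.sSup_mem hne hbdd
  have hmaxlen : ∀ (a b : V) (q : G.Walk a b), q.IsPath → q.length ≤ k :=
    fun a b q hq => le_csSup hbdd ⟨a, b, q, hq, rfl⟩
  rcases le_or_gt (2 * d) k with hge | hlt
  · exact ⟨u, v, p, hp, by omega⟩
  exfalso
  have hNu : ∀ w, G.Adj u w → w ∈ p.support := by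
    intro w hw
    by_contra hws
    have hpath : (Walk.cons hw.symm p).IsPath := hp.cons hws
    have h2 := hmaxlen _ _ _ hpath
    rw [Walk.length_cons, hplen] at h2
    omega
  have hNv : ∀ w, G.Adj v w → w ∈ p.support := by
    intro w hw
    by_contra hws
    have hws' : w ∉ p.reverse.support := by
      rw [Walk.support_reverse]; simpa using hws
    have hpath : (Walk.cons hw.symm p.reverse).IsPath := hp.reverse.cons hws'
    have h2 := hmaxlen _ _ _ hpath
    rw [Walk.length_cons, Walk.length_reverse, hplen] at h2
    omega
  have hnds : p.support.Nodup := hp.support_nodup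
  have hslen : p.support.length = k + 1 := by rw [Walk.length_support, hplen]
  set σ : V → V := fun a => if h : a ∈ p.support then (p.dropUntil a h).getVert 1 else a with hσ
  have hσ_eq : ∀ (a : V) (h : a ∈ p.support), σ a = (p.dropUntil a h).getVert 1 := by
    intro a h; simp [hσ, dif_pos h]
  have hsnd_inj : ∀ d1 ∈ p.darts, ∀ d2 ∈ p.darts, d1.snd = d2.snd → d1 = d2 := by
    have hnd : (p.darts.map (fun dd : G.Dart => dd.snd)).Nodup := by
      rw [Walk.map_snd_darts]; exact hnds.tail
    exact fun d1 h1 d2 h2 h => List.inj_on_of_nodup_map hnd h1 h2 h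
  have hfst_inj : ∀ d1 ∈ p.darts, ∀ d2 ∈ p.darts, d1.fst = d2.fst → d1 = d2 := by
    have hnd : (p.darts.map (fun dd : G.Dart => dd.fst)).Nodup := by
      rw [Walk.map_fst_darts]; exact (List.dropLast_sublist _).nodup hnds
    exact fun d1 h1 d2 h2 h => List.inj_on_of_nodup_map hnd h1 h2 h
  have hdart : ∀ (a : V) (h : a ∈ p.support), a ≠ v →
      ∃ dd ∈ p.darts, dd.fst = a ∧ dd.snd = σ a := by
    intro a h hav
    have hq : ¬ (p.dropUntil a h).Nil := Walk.not_nil_of_ne hav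
    exact ⟨(p.dropUntil a h).firstDart hq,
      p.darts_dropUntil_subset h (firstDart_mem_darts' _ hq), rfl, (hσ_eq a h).symm⟩
  have hv_not_fst : ∀ dd ∈ p.darts, dd.fst ≠ v := by
    intro dd hdd hfst
    have hnd2 := hnds
    rw [← Walk.map_fst_darts_append] at hnd2
    exact (List.nodup_append.mp hnd2).2.2 v (List.mem_map.2 ⟨dd, hdd, hfst⟩) v (by simp) rfl
  have hσ_surj : ∀ w ∈ p.support.tail, ∃ a, a ∈ p.support ∧ a ≠ v ∧ σ a = w := by
    intro w hw
    rw [← Walk.map_snd_darts] at hw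
    obtain ⟨dd, hdd, hsnd⟩ := List.mem_map.mp hw
    have hfstmem : dd.fst ∈ p.support := Walk.dart_fst_mem_support_of_mem_darts _ hdd
    have hfv : dd.fst ≠ v := hv_not_fst dd hdd
    obtain ⟨dd', hdd', h1, h2⟩ := hdart dd.fst hfstmem hfv
    have heq : dd' = dd := hfst_inj dd' hdd' dd hdd h1
    exact ⟨dd.fst, hfstmem, hfv, by rw [← h2, heq]; exact hsnd⟩
  set S : Finset V := p.support.toFinset.erase v with hS
  have hScard : S.card = k := by
    rw [hS, Finset.card_erase_of_mem (List.mem_toFinset.2 p.end_mem_support),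
      List.toFinset_card_of_nodup hnds, hslen]
    omega
  set A : Finset V := S.filter (fun a => G.Adj u (σ a)) with hA
  set B : Finset V := S.filter (fun a => G.Adj v a) with hB
  have hBcard : d ≤ B.card := by
    have hsub : G.neighborFinset v ⊆ B := by
      intro w hw
      rw [SimpleGraph.mem_neighborFinset] at hw
      rw [hB, Finset.mem_filter, hS, Finset.mem_erase]
      exact ⟨⟨(G.ne_of_adj hw).symm, List.mem_toFinset.2 (hNv w hw)⟩, hw⟩
    calc d ≤ G.degree v := hdeg v
      _ = (G.neighborFinset v).card := (G.card_neighborFinset_eq_degree v).symm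
      _ ≤ B.card := Finset.card_le_card hsub
  have hAcard : d ≤ A.card := by
    set f : V → V := fun w => if hw : w ∈ p.support.tail then (hσ_surj w hw).choose else w with hf
    have hfspec : ∀ w ∈ p.support.tail, (f w) ∈ p.support ∧ f w ≠ v ∧ σ (f w) = w := by
      intro w hw
      rw [hf]; simp only [dif_pos hw]
      exact (hσ_surj w hw).choose_spec
    have hNu_tail : ∀ w ∈ G.neighborFinset u, w ∈ p.support.tail := by
      intro w hw
      rw [SimpleGraph.mem_neighborFinset] at hw
      have h1 : w ∈ p.support := hNu w hw
      rw [p.support_eq_cons] at h1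
      rcases List.mem_cons.mp h1 with h | h
      · subst h; exact (G.irrefl hw).elim
      · exact h
    have h1 : ∀ w ∈ G.neighborFinset u, f w ∈ A := by
      intro w hw
      have hwt := hNu_tail w hw
      obtain ⟨m1, m2, m3⟩ := hfspec w hwt
      rw [SimpleGraph.mem_neighborFinset] at hw
      rw [hA, Finset.mem_filter, hS, Finset.mem_erase]
      exact ⟨⟨m2, List.mem_toFinset.2 m1⟩, by rw [m3]; exact hw⟩
    have h2 : Set.InjOn f (G.neighborFinset u) := by
      intro w1 hw1 w2 hw2 heq
      have t1 := (hfspec w1 (hNu_tail w1 (Finset.mem_coe.mp hw1))).2.2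
      have t2 := (hfspec w2 (hNu_tail w2 (Finset.mem_coe.mp hw2))).2.2
      rw [← t1, ← t2, heq]
    calc d ≤ G.degree u := hdeg u
      _ = (G.neighborFinset u).card := (G.card_neighborFinset_eq_degree u).symm
      _ ≤ A.card := Finset.card_le_card_of_injOn f h1 h2
  have hUnion : (A ∪ B).card ≤ k := by
    rw [← hScard]
    exact Finset.card_le_card (Finset.union_subset (Finset.filter_subset _ _)
      (Finset.filter_subset _ _))
  have hACB : 0 < (A ∩ B).card := by
    have hci := Finset.card_union_add_card_inter A B
    omega
  obtain ⟨a, ha⟩ := Finset.card_pos.mp hACB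
  rw [Finset.mem_inter] at ha
  obtain ⟨haA, haB⟩ := ha
  rw [hA, Finset.mem_filter] at haA
  rw [hB, Finset.mem_filter] at haB
  obtain ⟨haS, hadjuσ⟩ := haA
  have hadjva : G.Adj v a := haB.2
  rw [hS, Finset.mem_erase] at haS
  obtain ⟨hav, hasup'⟩ := haS
  have hasup : a ∈ p.support := List.mem_toFinset.mp hasup'
  set q1 := p.takeUntil a hasup with hq1
  set q2 := p.dropUntil a hasup with hq2
  have hq2nil : ¬ q2.Nil := Walk.not_nil_of_ne hav
  set q3 := q2.tail with hq3
  have hbu : G.Adj (q2.getVert 1) u := by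
    have h0 := hadjuσ
    rw [hσ_eq a hasup] at h0
    exact h0.symm
  set c : G.Walk u u :=
    q1.append (Walk.cons hadjva.symm (q3.reverse.append (Walk.cons hbu Walk.nil))) with hc
  have hq2supp : q2.support.tail = q3.support := (q2.support_tail_of_not_nil hq2nil).symm
  have hpsupp : p.support = q1.support ++ q3.support := by
    conv_lhs => rw [← p.take_spec hasup]
    rw [Walk.support_append, hq2supp]
  have hcsupp : c.support = q1.support ++ (q3.support.reverse ++ [u]) := by
    rw [hc, Walk.support_append, Walk.support_cons, List.tail_cons, Walk.support_append,
      Walk.support_reverse, Walk.support_cons, Walk.support_nil, List.tail_cons]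
  have hcsupp_perm : List.Perm c.support (p.support ++ [u]) := by
    rw [hcsupp, hpsupp, List.append_assoc]
    exact List.Perm.append_left _ ((List.reverse_perm _).append_right _)
  have hq1cons : q1.support = u :: q1.support.tail := q1.support_eq_cons
  have h1tail : c.support.tail = q1.support.tail ++ (q3.support.reverse ++ [u]) := by
    rw [hcsupp]
    conv_lhs => rw [hq1cons, List.cons_append, List.tail_cons]
  have h2tail : p.support.tail = q1.support.tail ++ q3.support := by
    rw [hpsupp]
    conv_lhs => rw [hq1cons, List.cons_append, List.tail_cons]
  have hcsupp_tail_perm : List.Perm c.support.tail (p.support.tail ++ [u]) := by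
    rw [h1tail, h2tail, List.append_assoc]
    exact List.Perm.append_left _ ((List.reverse_perm _).append_right _)
  have hctail_nodup : c.support.tail.Nodup := by
    refine hcsupp_tail_perm.nodup_iff.mpr ?_
    rw [List.nodup_append]
    refine ⟨hnds.tail, List.nodup_singleton u, ?_⟩
    intro x hx y hxu hxy
    rw [List.mem_singleton] at hxu
    subst hxu
    subst hxy
    have h3 := hnds
    rw [p.support_eq_cons] at h3
    exact (List.nodup_cons.mp h3).1 hx
  have hq1q2len : q1.length + q2.length = k := by
    have hto := congrArg Walk.length (p.take_spec hasup)
    rw [Walk.length_append, ← hq1, ← hq2, hplen] at hto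
    omega
  have hq3len : q3.length + 1 = q2.length := Walk.length_tail_add_one hq2nil
  have hclen : c.length = k + 1 := by
    rw [hc, Walk.length_append, Walk.length_cons, Walk.length_append,
      Walk.length_reverse, Walk.length_cons, Walk.length_nil]
    omega
  have hout : ∃ x : V, x ∉ p.support := by
    by_contra h
    push_neg at h
    have h1 : (Finset.univ : Finset V) ⊆ p.support.toFinset := fun x _ => List.mem_toFinset.2 (h x)
    have h2 := Finset.card_le_card h1
    rw [Finset.card_univ, List.toFinset_card_of_nodup hnds, hslen] at h2
    omega
  obtain ⟨x, hx⟩ := hout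
  obtain ⟨w0⟩ := hconn.preconnected x u
  obtain ⟨dd, hdd, hd1, hd2⟩ := w0.exists_boundary_dart {t | t ∉ p.support} hx
    (by simp [Walk.start_mem_support])
  simp only [Set.mem_setOf_eq] at hd1 hd2
  have hy : dd.fst ∉ p.support := hd1
  have hz : dd.snd ∈ p.support := not_not.mp hd2
  have hzc : dd.snd ∈ c.support := hcsupp_perm.mem_iff.mpr (List.mem_append.2 (Or.inl hz))
  set c' := c.rotate _ hzc with hc'
  have hc'len : c'.length = k + 1 := by
    have h1 := (Walk.rotate_darts c _ hzc).perm.length_eq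
    rw [Walk.length_darts, Walk.length_darts] at h1
    exact h1.trans hclen
  have hc'nil : ¬ c'.Nil := by
    rw [Walk.not_nil_iff_lt_length, hc'len]; omega
  have hc'tail_nodup : c'.tail.support.Nodup := by
    rw [Walk.support_tail_of_not_nil _ hc'nil]
    exact ((Walk.support_rotate c _ hzc).perm.nodup_iff).mpr hctail_nodup
  set final : G.Walk dd.fst (c'.getVert 1) := Walk.cons dd.adj c'.tail.reverse with hfinal
  have hfinal_path : final.IsPath := by
    rw [hfinal, Walk.cons_isPath_iff]
    constructor
    · rw [Walk.isPath_def, Walk.support_reverse, List.nodup_reverse]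
      exact hc'tail_nodup
    · intro hmem
      rw [Walk.support_reverse, List.mem_reverse,
        Walk.support_tail_of_not_nil _ hc'nil] at hmem
      have h1 := ((Walk.support_rotate c _ hzc).perm.mem_iff).mp hmem
      have h2 := hcsupp_tail_perm.mem_iff.mp h1
      rcases List.mem_append.mp h2 with h3 | h3
      · exact hy (List.mem_of_mem_tail h3)
      · rw [List.mem_singleton] at h3
        rw [h3] at hy
        exact hy p.start_mem_support
  have hfinal_len : final.length = k + 1 := by
    rw [hfinal, Walk.length_cons, Walk.length_reverse]
    have h1 := Walk.length_tail_add_one hc'nil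
    omega
  have hle := hmaxlen _ _ final hfinal_path
  omega
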